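/- Let f be C² with L-Lipschitz Hessian, and suppose ∇f(x) + (∇²f(x) + λI)d = r with λ ≤ β‖d‖/α and ‖r‖ ≤ ξ‖d‖^{1+ζ} for 0 < ζ ≤ 1. Then ‖∇f(x+d)‖ ≤ (L/2 + β/α)‖d‖² + ξ‖d‖^{1+ζ}. -/

import Mathlib

/-!
By the Newton-type equation, `∇f(x + d) = (∇f(x + d) - ∇f(x) - ∇²f(x) d) + r - λ d`. The first
term is a first-order Taylor remainder of `∇f`, of norm at most `L/2 ‖d‖²` because `∇²f` is
`L`-Lipschitz; the residual contributes `ξ ‖d‖^{1+ζ}` and the shift `λ ‖d‖ ≤ (β/α) ‖d‖²`.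
-/

open Set

section Taylor

variable {E F : Type*} [NormedAddCommGroup E] [NormedSpace ℝ E]
  [NormedAddCommGroup F] [NormedSpace ℝ F] {g : E → F}

theorem hasDerivAt_sub_sub_smul_fderiv (hg : Differentiable ℝ g) (x d : E) (t : ℝ) :
    HasDerivAt (fun t : ℝ => g (x + t • d) - g x - t • fderiv ℝ g x d)
      (fderiv ℝ g (x + t • d) d - fderiv ℝ g x d) t := by
  have hline : HasDerivAt (fun t : ℝ => x + t • d) d t := by
    simpa using ((hasDerivAt_id t).smul_const d).const_add x
  have hlin : HasDerivAt (fun t : ℝ => t • fderiv ℝ g x d) (fderiv ℝ g x d) t := by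
    simpa using (hasDerivAt_id t).smul_const (fderiv ℝ g x d)
  exact (((hg _).hasFDerivAt.comp_hasDerivAt t hline).sub_const (g x)).sub hlin

theorem norm_image_add_sub_sub_fderiv_le {L : ℝ} (hg : Differentiable ℝ g)
    (hLip : ∀ y z : E, ‖fderiv ℝ g y - fderiv ℝ g z‖ ≤ L * ‖y - z‖) (x d : E) :
    ‖g (x + d) - g x - fderiv ℝ g x d‖ ≤ L / 2 * ‖d‖ ^ 2 := by
  -- Compare the remainder along `t ↦ x + t • d` with `t ↦ L/2 ‖d‖² t²`, whose derivative
  -- `L ‖d‖² t` dominates the norm of the remainder's derivative.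
  have hbound : ∀ t : ℝ, HasDerivAt (fun t : ℝ => L / 2 * ‖d‖ ^ 2 * t ^ 2) (L * ‖d‖ ^ 2 * t) t :=
    fun t => ((hasDerivAt_pow 2 t).const_mul (L / 2 * ‖d‖ ^ 2)).congr_deriv (by ring)
  have hderiv_le : ∀ t ∈ Ico (0 : ℝ) 1,
      ‖fderiv ℝ g (x + t • d) d - fderiv ℝ g x d‖ ≤ L * ‖d‖ ^ 2 * t := by
    intro t ht
    calc ‖fderiv ℝ g (x + t • d) d - fderiv ℝ g x d‖
        = ‖(fderiv ℝ g (x + t • d) - fderiv ℝ g x) d‖ := rfl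
      _ ≤ ‖fderiv ℝ g (x + t • d) - fderiv ℝ g x‖ * ‖d‖ := ContinuousLinearMap.le_opNorm _ d
      _ ≤ L * ‖t • d‖ * ‖d‖ := by
          gcongr
          simpa using hLip (x + t • d) x
      _ = L * ‖d‖ ^ 2 * t := by
          rw [norm_smul, Real.norm_of_nonneg ht.1]; ring
  have hcomp := image_norm_le_of_norm_deriv_right_le_deriv_boundary
    (fun t _ => (hasDerivAt_sub_sub_smul_fderiv hg x d t).continuousAt.continuousWithinAt)
    (fun t _ => (hasDerivAt_sub_sub_smul_fderiv hg x d t).hasDerivWithinAt)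
    (by simp) hbound hderiv_le (right_mem_Icc.2 zero_le_one)
  simpa using hcomp

end Taylor

theorem ContDiff.differentiable_gradient {E : Type*} [NormedAddCommGroup E]
    [InnerProductSpace ℝ E] [CompleteSpace E] {f : E → ℝ} (hf : ContDiff ℝ 2 f) :
    Differentiable ℝ (gradient f) :=
  ((InnerProductSpace.toDual ℝ E).symm.contDiff.comp
    (hf.fderiv_right (by norm_num))).differentiable one_ne_zero

theorem norm_smul_le_of_le_mul_norm {E : Type*} [SeminormedAddCommGroup E] [NormedSpace ℝ E]
    {lam c : ℝ} {d : E} (hlam : 0 ≤ lam) (hle : lam ≤ c * ‖d‖) :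
    ‖lam • d‖ ≤ c * ‖d‖ ^ 2 := by
  rw [norm_smul, Real.norm_of_nonneg hlam]
  nlinarith [norm_nonneg d]

theorem stmt5_general (n : ℕ) (f : EuclideanSpace ℝ (Fin n) → ℝ) (L : ℝ)
    (hf : ContDiff ℝ 2 f)
    (hLip : ∀ y z : EuclideanSpace ℝ (Fin n),
      ‖fderiv ℝ (gradient f) y - fderiv ℝ (gradient f) z‖ ≤ L * ‖y - z‖)
    (x d r : EuclideanSpace ℝ (Fin n)) (lam β α ξ ζ : ℝ)
    (hlam : 0 ≤ lam)
    (heq : gradient f x + (fderiv ℝ (gradient f) x d + lam • d) = r)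
    (hshift : lam ≤ β * ‖d‖ / α)
    (hres : ‖r‖ ≤ ξ * ‖d‖ ^ (1 + ζ)) :
    ‖gradient f (x + d)‖ ≤ (L/2 + β/α) * ‖d‖^2 + ξ * ‖d‖ ^ (1 + ζ) := by
  have htaylor := norm_image_add_sub_sub_fderiv_le hf.differentiable_gradient hLip x d
  have hshift_term : ‖lam • d‖ ≤ β / α * ‖d‖ ^ 2 :=
    norm_smul_le_of_le_mul_norm hlam (by rwa [div_mul_eq_mul_div])
  calc ‖gradient f (x + d)‖
      = ‖(gradient f (x + d) - gradient f x - fderiv ℝ (gradient f) x d) + r - lam • d‖ := by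
        rw [← heq]; congr 1; abel
    _ ≤ ‖gradient f (x + d) - gradient f x - fderiv ℝ (gradient f) x d‖ + ‖r‖ + ‖lam • d‖ :=
        (norm_sub_le _ _).trans (by gcongr; exact norm_add_le _ _)
    _ ≤ L / 2 * ‖d‖ ^ 2 + ξ * ‖d‖ ^ (1 + ζ) + β / α * ‖d‖ ^ 2 := by gcongr
    _ = (L/2 + β/α) * ‖d‖^2 + ξ * ‖d‖ ^ (1 + ζ) := by ring

theorem stmt5 (n : ℕ) (f : EuclideanSpace ℝ (Fin n) → ℝ) (L : ℝ) (hL : 0 < L)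
    (hf : ContDiff ℝ 2 f)
    (hLip : ∀ y z : EuclideanSpace ℝ (Fin n),
      ‖fderiv ℝ (gradient f) y - fderiv ℝ (gradient f) z‖ ≤ L * ‖y - z‖)
    (x d r : EuclideanSpace ℝ (Fin n)) (lam β α ξ ζ : ℝ)
    (hlam : 0 ≤ lam) (hβ : 1 ≤ β) (hα : 0 < α) (hξ : 0 < ξ)
    (hζ : 0 < ζ) (hζ1 : ζ ≤ 1)
    (heq : gradient f x + (fderiv ℝ (gradient f) x d + lam • d) = r)
    (hshift : lam ≤ β * ‖d‖ / α)
    (hres : ‖r‖ ≤ ξ * ‖d‖ ^ (1 + ζ)) :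
    ‖gradient f (x + d)‖ ≤ (L/2 + β/α) * ‖d‖^2 + ξ * ‖d‖ ^ (1 + ζ) :=
  stmt5_general n f L hf hLip x d r lam β α ξ ζ hlam heq hshift hres
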